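/- arXiv:1202.5812 — 3 statements merged into one kernel-verified Lean document; each statement's English description precedes it below -/
import Mathlib

section
/- Let G be a finite group and N a normal subgroup of G. Assume that for every bicyclic subgroup A of G, the image of A in G/N (i.e., the subgroup AN/N) is cyclic. Then the image of the inflation map H^2(G/N, ℚ/ℤ) → H^2(G, ℚ/ℤ) is contained in B_0(G). -/
/-- The coefficient group `ℚ/ℤ`. -/
abbrev QZ : Type := ℚ ⧸ AddSubgroup.zmultiples (1 : ℚ)

/-- A (inhomogeneous) 2-cocycle on `G` with values in `ℚ/ℤ` (trivial action). -/
def IsGrpCocycle {G : Type*} [Group G] (f : G → G → QZ) : Prop :=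
  ∀ g h k : G, f g h + f (g * h) k = f h k + f g (h * k)

/-- A 2-coboundary on `G` with values in `ℚ/ℤ` (trivial action). -/
def IsGrpCoboundary {G : Type*} [Group G] (f : G → G → QZ) : Prop :=
  ∃ c : G → QZ, ∀ g h : G, f g h = c g + c h - c (g * h)

/-- The additive group of 2-cocycles. -/
def cocycles2 (G : Type*) [Group G] : AddSubgroup (G → G → QZ) where
  carrier := {f | IsGrpCocycle f}
  zero_mem' := by intro g h k; simp
  add_mem' := by
    intro a b ha hb g h k
    simp only [Pi.add_apply]
    rw [add_add_add_comm, ha g h k, hb g h k, add_add_add_comm]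
  neg_mem' := by
    intro a ha g h k
    simp only [Pi.neg_apply, ← neg_add]
    rw [ha g h k]

/-- The subgroup of 2-coboundaries inside the group of 2-cocycles. -/
def coboundaries2 (G : Type*) [Group G] : AddSubgroup (cocycles2 G) where
  carrier := {f | IsGrpCoboundary (f : G → G → QZ)}
  zero_mem' := ⟨0, by intro g h; simp⟩
  add_mem' := by
    rintro a b ⟨c, hc⟩ ⟨d, hd⟩
    refine ⟨c + d, fun g h => ?_⟩
    have : ((a + b : cocycles2 G) : G → G → QZ) g h
        = (a : G → G → QZ) g h + (b : G → G → QZ) g h := rfl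
    rw [this, hc g h, hd g h]
    simp only [Pi.add_apply]
    abel
  neg_mem' := by
    rintro a ⟨c, hc⟩
    refine ⟨-c, fun g h => ?_⟩
    have : ((-a : cocycles2 G) : G → G → QZ) g h = -((a : G → G → QZ) g h) := rfl
    rw [this, hc g h]
    simp only [Pi.neg_apply]
    abel

/-- The second cohomology group `H²(G, ℚ/ℤ)` (trivial action), as cocycles mod coboundaries. -/
abbrev H2 (G : Type*) [Group G] : Type _ := cocycles2 G ⧸ coboundaries2 G

/-- A group is bicyclic if it is cyclic or the direct product of two cyclic groups. -/
def IsBicyclic (A : Type*) [Group A] : Prop :=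
  IsCyclic A ∨ ∃ B C : Subgroup A, IsCyclic B ∧ IsCyclic C ∧ Nonempty (A ≃* B × C)

/-- The restriction of `f` to every bicyclic subgroup is a coboundary. -/
def RestrictsToCoboundaries {G : Type*} [Group G] (f : G → G → QZ) : Prop :=
  ∀ A : Subgroup G, IsBicyclic A → IsGrpCoboundary (fun a b : A => f a b)

/-- The Bogomolov multiplier `B₀(G)`: the subgroup of `H²(G, ℚ/ℤ)` consisting of the classes
whose restriction to every bicyclic subgroup of `G` vanishes. -/
def B0 (G : Type*) [Group G] : AddSubgroup (H2 G) where
  carrier := {x | ∃ f : cocycles2 G,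
    (QuotientAddGroup.mk f : H2 G) = x ∧ RestrictsToCoboundaries (f : G → G → QZ)}
  zero_mem' := by
    refine ⟨0, rfl, fun A _ => ⟨0, fun a b => ?_⟩⟩
    simp
  add_mem' := by
    rintro x y ⟨f, rfl, hf⟩ ⟨g, rfl, hg⟩
    refine ⟨f + g, rfl, fun A hA => ?_⟩
    obtain ⟨c, hc⟩ := hf A hA
    obtain ⟨d, hd⟩ := hg A hA
    refine ⟨c + d, fun a b => ?_⟩
    have hc' : (f : G → G → QZ) (a : G) (b : G) = c a + c b - c (a * b) := hc a b
    have hd' : (g : G → G → QZ) (a : G) (b : G) = d a + d b - d (a * b) := hd a b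
    show ((f + g : cocycles2 G) : G → G → QZ) (a : G) (b : G)
        = (c + d) a + (c + d) b - (c + d) (a * b)
    have : ((f + g : cocycles2 G) : G → G → QZ) (a : G) (b : G)
        = (f : G → G → QZ) (a : G) (b : G) + (g : G → G → QZ) (a : G) (b : G) := rfl
    rw [this, hc', hd']
    simp only [Pi.add_apply]
    abel
  neg_mem' := by
    rintro x ⟨f, rfl, hf⟩
    refine ⟨-f, rfl, fun A hA => ?_⟩
    obtain ⟨c, hc⟩ := hf A hA
    refine ⟨-c, fun a b => ?_⟩
    have hc' : (f : G → G → QZ) (a : G) (b : G) = c a + c b - c (a * b) := hc a b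
    show ((-f : cocycles2 G) : G → G → QZ) (a : G) (b : G)
        = (-c) a + (-c) b - (-c) (a * b)
    have : ((-f : cocycles2 G) : G → G → QZ) (a : G) (b : G)
        = -((f : G → G → QZ) (a : G) (b : G)) := rfl
    rw [this, hc']
    simp only [Pi.neg_apply]
    abel


/-- The inflation of a function on `G/N` to `G`. -/
def inflate {G : Type*} [Group G] (N : Subgroup G) [N.Normal] (f : G ⧸ N → G ⧸ N → QZ) :
    G → G → QZ :=
  fun g h => f ((g : G) : G ⧸ N) ((h : G) : G ⧸ N)

lemma inflate_mem {G : Type*} [Group G] (N : Subgroup G) [N.Normal] (f : cocycles2 (G ⧸ N)) :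
    inflate N (f : G ⧸ N → G ⧸ N → QZ) ∈ cocycles2 G := by
  intro g h k
  have hf : IsGrpCocycle (f : G ⧸ N → G ⧸ N → QZ) := f.2
  have := hf ((g : G) : G ⧸ N) ((h : G) : G ⧸ N) ((k : G) : G ⧸ N)
  simpa [inflate, QuotientGroup.mk_mul] using this

lemma QZ_divisible (a : QZ) (n : ℕ) (hn : 0 < n) : ∃ b : QZ, n • b = a := by
  obtain ⟨q, rfl⟩ := QuotientAddGroup.mk_surjective a
  refine ⟨QuotientAddGroup.mk (q / n), ?_⟩
  rw [← QuotientAddGroup.mk_nsmul]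
  congr 1
  rw [nsmul_eq_mul]
  field_simp

lemma cyclic_cocycle_coboundary (Q : Type*) [Group Q] [Finite Q] [IsCyclic Q]
    (f : Q → Q → QZ) (hf : IsGrpCocycle f) : IsGrpCoboundary f := by
  obtain ⟨g, hg⟩ := IsCyclic.exists_generator (α := Q)
  set n := orderOf g with hn
  have hnpos : 0 < n := orderOf_pos g
  set e := f 1 1 with he
  have he1 : ∀ x : Q, f x 1 = e := by
    intro x
    have := hf x 1 1
    simp only [mul_one] at this
    exact add_right_cancel this
  -- the partial sums
  set c : ℕ → QZ := fun i => ∑ j ∈ Finset.range i, f (g ^ j) g with hc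
  have hcsucc : ∀ i, c (i + 1) = c i + f (g ^ i) g := by
    intro i; simp [hc, Finset.sum_range_succ]
  have key : ∀ i j : ℕ, f (g ^ i) (g ^ j) = c (i + j) - c i - c j + e := by
    intro i j
    induction j with
    | zero => simp [he1, hc]
    | succ j ih =>
      have h1 := hf (g ^ i) (g ^ j) g
      rw [← pow_add] at h1
      have h2 : f (g ^ i) (g ^ j * g) =
          f (g ^ i) (g ^ j) + f (g ^ (i + j)) g - f (g ^ j) g := by
        rw [h1]; abel
      rw [← pow_succ] at h2
      have h3 : i + (j + 1) = i + j + 1 := rfl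
      rw [h2, ih, h3, hcsucc (i + j), hcsucc j]
      abel
  have hgn : g ^ n = 1 := pow_orderOf_eq_one g
  have hper : ∀ i, c (i + n) = c i + c n := by
    intro i
    have := key i n
    rw [hgn, he1] at this
    have h2 : (0 : QZ) = c (i + n) - c i - c n := by
      have := this
      linear_combination (norm := abel) this - (rfl : e = e)
    linear_combination (norm := abel) -h2
  obtain ⟨b, hb⟩ := QZ_divisible (c n) n hnpos
  set c' : ℕ → QZ := fun i => c i - i • b with hc'
  have hper' : ∀ i k : ℕ, c' (i + k * n) = c' i := by
    intro i k
    induction k with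
    | zero => simp
    | succ k ih =>
      have : i + (k + 1) * n = (i + k * n) + n := by ring
      rw [this]
      simp only [hc']
      rw [hper, add_nsmul, hb]
      simp only [hc'] at ih
      linear_combination (norm := abel) ih
  have hmod : ∀ i j : ℕ, i ≡ j [MOD n] → c' i = c' j := by
    have base : ∀ i j : ℕ, i ≤ j → i ≡ j [MOD n] → c' i = c' j := by
      intro i j hij hm
      obtain ⟨k, hk⟩ := (Nat.modEq_iff_dvd' hij).mp hm
      have h3 : j = i + n * k := by omega
      rw [h3, mul_comm n k]
      exact (hper' i k).symm
    intro i j hm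
    rcases le_total i j with h | h
    · exact base i j h hm
    · exact (base j i h hm.symm).symm
  have hex : ∀ x : Q, ∃ i : ℕ, g ^ i = x := by
    intro x
    have h1 : x ∈ Subgroup.zpowers g := hg x
    rw [← mem_powers_iff_mem_zpowers] at h1
    exact h1
  choose ind hind using hex
  refine ⟨fun x => e - c' (ind x), fun x y => ?_⟩
  beta_reduce
  have hxy : g ^ ind (x * y) = g ^ (ind x + ind y) := by
    rw [pow_add, hind, hind, hind]
  have hmxy : ind (x * y) ≡ ind x + ind y [MOD n] :=
    (pow_eq_pow_iff_modEq.mp hxy)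
  have h1 : f x y = c (ind x + ind y) - c (ind x) - c (ind y) + e := by
    conv_lhs => rw [← hind x, ← hind y]
    exact key _ _
  rw [h1, hmod _ _ hmxy]
  simp only [hc']
  rw [add_nsmul]
  abel

/-- Let `G` be a finite group and `N` a normal subgroup such that the image in `G/N` of every
bicyclic subgroup of `G` is cyclic. Then the image of the inflation map
`H²(G/N, ℚ/ℤ) → H²(G, ℚ/ℤ)` is contained in `B₀(G)`. -/
theorem inflation_image_le_B0 (G : Type) [Group G] [Finite G] (N : Subgroup G) [N.Normal]
    (hbi : ∀ A : Subgroup G, IsBicyclic A → IsCyclic ↥(A.map (QuotientGroup.mk' N)))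
    (f : cocycles2 (G ⧸ N)) :
    (QuotientAddGroup.mk (⟨inflate N (f : G ⧸ N → G ⧸ N → QZ), inflate_mem N f⟩ :
      cocycles2 G) : H2 G) ∈ B0 G := by
  refine ⟨_, rfl, fun A hA => ?_⟩
  set Q := A.map (QuotientGroup.mk' N) with hQ
  have hQc : IsCyclic Q := hbi A hA
  -- the restriction of f to the subgroup Q of G/N
  set fQ : Q → Q → QZ := fun x y => (f : G ⧸ N → G ⧸ N → QZ) x y with hfQ
  have hfQcoc : IsGrpCocycle fQ := by
    intro x y z
    have := f.2 (x : G ⧸ N) (y : G ⧸ N) (z : G ⧸ N)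
    simpa [hfQ] using this
  obtain ⟨c, hc⟩ := cyclic_cocycle_coboundary Q fQ hfQcoc
  -- map from A to Q
  have hmem : ∀ a : A, (QuotientGroup.mk (a : G) : G ⧸ N) ∈ Q := by
    intro a
    exact ⟨(a : G), a.2, rfl⟩
  set φ : A → Q := fun a => ⟨QuotientGroup.mk (a : G), hmem a⟩ with hφ
  have hφmul : ∀ a b : A, φ (a * b) = φ a * φ b := by
    intro a b
    apply Subtype.ext
    simp [hφ, QuotientGroup.mk_mul]
  refine ⟨fun a => c (φ a), fun a b => ?_⟩
  have h1 : inflate N (f : G ⧸ N → G ⧸ N → QZ) (a : G) (b : G) = fQ (φ a) (φ b) := rfl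
  show inflate N (f : G ⧸ N → G ⧸ N → QZ) (a : G) (b : G) = _
  rw [h1, hc (φ a) (φ b), ← hφmul]
end

section
/- Let G be a finite group and N a normal subgroup of G. Assume that (i) the inflation map H^2(G/N, ℚ/ℤ) → H^2(G, ℚ/ℤ) is not the zero map, and (ii) for every bicyclic subgroup A of G, the image of A in G/N (i.e., the subgroup AN/N) is cyclic. Then B_0(G) ≠ 0. -/
/-!
Since `ℚ/ℤ` is divisible, every 2-cocycle on a finite cyclic group with values in `ℚ/ℤ` is a
coboundary. If `f` is a 2-cocycle on `G/N`, the restriction of its inflation to a bicyclic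
subgroup `A` is pulled back from the cyclic group `AN/N`, hence is a coboundary. So the class of
the inflation of `f` lies in `B₀(G)`, and it is nonzero when the inflation of `f` is not a coboundary.
-/

open Finset

section Functoriality

variable {H K : Type*} [Group H] [Group K] {f : K → K → QZ}

theorem IsGrpCocycle.comp (hf : IsGrpCocycle f) (φ : H →* K) :
    IsGrpCocycle fun a b => f (φ a) (φ b) := by
  intro g h k
  simpa only [map_mul] using hf (φ g) (φ h) (φ k)

theorem IsGrpCoboundary.comp (hf : IsGrpCoboundary f) (φ : H →* K) :
    IsGrpCoboundary fun a b => f (φ a) (φ b) := by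
  obtain ⟨c, hc⟩ := hf
  exact ⟨fun a => c (φ a), fun a b => by dsimp only; rw [hc, map_mul]⟩

end Functoriality

section Cyclic

variable {C : Type*} [Group C] {f : C → C → QZ}

theorem IsGrpCocycle.apply_one_right (hf : IsGrpCocycle f) (g : C) : f g 1 = f 1 1 := by
  simpa only [mul_one, add_left_inj] using hf g 1 1

def cocyclePowSum (f : C → C → QZ) (σ : C) (n : ℕ) : QZ :=
  ∑ k ∈ range n, f (σ ^ k) σ

theorem IsGrpCocycle.apply_pow_pow (hf : IsGrpCocycle f) (σ : C) (i j : ℕ) :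
    f (σ ^ i) (σ ^ j) = f 1 1 + cocyclePowSum f σ (i + j) - cocyclePowSum f σ i
      - cocyclePowSum f σ j := by
  induction j with
  | zero =>
    simp only [pow_zero, hf.apply_one_right, add_zero, cocyclePowSum, range_zero, sum_empty]
    abel
  | succ j ih =>
    have hcoc := hf (σ ^ i) (σ ^ j) σ
    rw [← pow_add, ← pow_succ, ih] at hcoc
    rw [eq_sub_of_add_eq' hcoc.symm, ← add_assoc]
    simp only [cocyclePowSum, sum_range_succ]
    abel

theorem isGrpCoboundary_of_isCyclic [Finite C] [IsCyclic C] (hf : IsGrpCocycle f) :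
    IsGrpCoboundary f := by
  obtain ⟨σ, hσ⟩ := IsCyclic.exists_monoid_generator (α := C)
  set a := cocyclePowSum f σ
  set m := orderOf σ
  have hm : (m : ℤ) ≠ 0 := by exact_mod_cast (orderOf_pos σ).ne'
  -- `QZ` is `AddCircle (1 : ℚ)`, whose `DivisibleBy ℤ` instance provides `t`.
  obtain ⟨t, ht⟩ : ∃ t : QZ, m • t = a m :=
    ⟨DivisibleBy.div (a m) (m : ℤ), by rw [← natCast_zsmul]; exact DivisibleBy.div_cancel _ hm⟩
  -- `i ↦ i • t - a i` is `m`-periodic, so it descends to a function on `C`.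
  set d : ℕ → QZ := fun i => i • t - a i
  have hd : Function.Periodic d m := by
    intro i
    have hshift : a (i + m) = a i + a m := by
      have h := hf.apply_pow_pow σ i m
      rwa [pow_orderOf_eq_one, hf.apply_one_right, add_sub_assoc, add_sub_assoc, left_eq_add,
        sub_sub, sub_eq_zero] at h
    simp only [d, add_nsmul, ht, hshift]
    abel
  have hd_pow {i j : ℕ} (hij : σ ^ i = σ ^ j) : d i = d j := by
    rw [← hd.map_mod_nat i, ← hd.map_mod_nat j, pow_eq_pow_iff_modEq.mp hij]
  choose e he using fun x => (Submonoid.mem_powers_iff x σ).mp (hσ x)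
  refine ⟨fun x => f 1 1 + d (e x), fun g h => ?_⟩
  have hgh : d (e (g * h)) = d (e g + e h) := hd_pow (by rw [he, pow_add, he, he])
  conv_lhs => rw [← he g, ← he h, hf.apply_pow_pow]
  simp only [hgh, d, add_nsmul]
  abel

end Cyclic

theorem restrictsToCoboundaries_inflate {G : Type*} [Group G] {N : Subgroup G} [N.Normal]
    [Finite (G ⧸ N)] {f : G ⧸ N → G ⧸ N → QZ} (hf : IsGrpCocycle f)
    (hbi : ∀ A : Subgroup G, IsBicyclic A → IsCyclic ↥(A.map (QuotientGroup.mk' N))) :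
    RestrictsToCoboundaries (inflate N f) := by
  intro A hA
  let C := A.map (QuotientGroup.mk' N)
  have : IsCyclic C := hbi A hA
  exact (isGrpCoboundary_of_isCyclic (hf.comp C.subtype)).comp
    ((QuotientGroup.mk' N).subgroupMap A)

/-- Let `G` be a finite group and `N` a normal subgroup such that (i) the inflation map
`H²(G/N, ℚ/ℤ) → H²(G, ℚ/ℤ)` is not the zero map, and (ii) the image in `G/N` of every
bicyclic subgroup of `G` is cyclic. Then `B₀(G) ≠ 0`. -/
theorem B0_ne_bot_of_inflation (G : Type) [Group G] [Finite G] (N : Subgroup G) [N.Normal]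
    (hinf : ∃ f : cocycles2 (G ⧸ N), ¬ IsGrpCoboundary (inflate N (f : G ⧸ N → G ⧸ N → QZ)))
    (hbi : ∀ A : Subgroup G, IsBicyclic A → IsCyclic ↥(A.map (QuotientGroup.mk' N))) :
    B0 G ≠ ⊥ := by
  obtain ⟨f, hf⟩ := hinf
  let F : cocycles2 G := ⟨inflate N f, f.2.comp (QuotientGroup.mk' N)⟩
  have hF_mem : (F : H2 G) ∈ B0 G := ⟨F, rfl, restrictsToCoboundaries_inflate f.2 hbi⟩
  have hF_ne : (F : H2 G) ≠ 0 := fun h => hf ((QuotientAddGroup.eq_zero_iff F).mp h)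
  exact AddSubgroup.ne_bot_iff_exists_ne_zero.mpr ⟨⟨F, hF_mem⟩, by simpa using hF_ne⟩
end

section
/- Let p be an odd prime number and let G be the group Φ_10(1^5), i.e., the group of order p^5 with generators f1,…,f5 and relations f_i^p = 1 (1 ≤ i ≤ 5), [f2,f1] = f3, [f3,f1] = f4, [f4,f1] = [f3,f2] = f5, [f4,f2] = [f4,f3] = 1, and f5 central. Then B_0(G) ≠ 0. -/
/-- The commutator `[g,h] = g⁻¹h⁻¹gh`. -/
def cmt {G : Type*} [Group G] (g h : G) : G := g⁻¹ * h⁻¹ * g * h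

/-!
Writing elements of `G` in the normal form `f1^a f2^b f3^c f4^d f5^e` with exponents in `ZMod p`,
the collection formula gives the multiplication in coordinates. The polynomial
`A·C(b,2) + (c + A b)·B` in the coordinates `(a,b,c,d,e)` and `(A,B,C,D,E)` of `g` and `h`
is a 2-cocycle `ω` on `G` with `ω g h = ω h g` whenever `g` and `h` commute. Such a cocycle
defines an abelian extension over any abelian subgroup, and this extension splits over a
bicyclic subgroup because `ℚ/ℤ` is divisible; hence the class of `ω` lies in `B₀(G)`.
It is not a coboundary: from `x y = y x z` a coboundary `δc` gives
`ω x y - ω y x - ω (y x) z = -c z`, but the relations `f4 f1 = f1 f4 f5` and `f3 f2 = f2 f3 f5`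
give the values `0` and `1/p`.
-/

lemma QZ.exists_nsmul_eq {m : ℕ} (hm : m ≠ 0) (t : QZ) : ∃ r : QZ, m • r = t := by
  obtain ⟨q, rfl⟩ := QuotientAddGroup.mk_surjective t
  refine ⟨((q / m : ℚ) : QZ), ?_⟩
  rw [← QuotientAddGroup.mk_nsmul, nsmul_eq_mul, mul_div_cancel₀ _ (Nat.cast_ne_zero.2 hm)]

noncomputable def ZMod.toQZ (p : ℕ) [NeZero p] : ZMod p →+ QZ :=
  ZMod.lift p ⟨AddMonoidHom.mk' (fun j : ℤ ↦ ((j / p : ℚ) : QZ)) (by simp [add_div]),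
    by simp⟩

lemma ZMod.toQZ_one_ne_zero {p : ℕ} [NeZero p] (hp : 1 < p) : ZMod.toQZ p 1 ≠ 0 := by
  have hval : ZMod.toQZ p 1 = ((1 / p : ℚ) : QZ) := by
    rw [← Int.cast_one (R := ZMod p), ZMod.toQZ, ZMod.lift_coe]
    simp
  rw [hval, Ne, QuotientAddGroup.eq_zero_iff, AddSubgroup.mem_zmultiples_iff]
  rintro ⟨k, hk⟩
  rw [zsmul_one] at hk
  have hp' : (1 : ℚ) < p := by exact_mod_cast hp
  have h0 : (0 : ℚ) < k := hk ▸ by positivity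
  have h1 : (k : ℚ) < 1 := hk ▸ (div_lt_one (by linarith)).2 hp'
  have : (0 : ℤ) < k ∧ k < 1 := ⟨by exact_mod_cast h0, by exact_mod_cast h1⟩
  omega

section Extension

variable {A : Type*} [Group A]

lemma IsGrpCocycle.apply_one_left {f : A → A → QZ} (hf : IsGrpCocycle f) (a : A) :
    f 1 a = f 1 1 := by
  have h := hf 1 1 a
  rw [one_mul, one_mul] at h
  exact (add_right_cancel h).symm

lemma IsGrpCocycle.apply_one_right_s6 {f : A → A → QZ} (hf : IsGrpCocycle f) (a : A) :
    f a 1 = f 1 1 := by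
  have h := hf a 1 1
  rw [mul_one, mul_one, add_comm (f 1 1)] at h
  exact add_left_cancel h

/-- The central extension of `A` by `ℚ/ℤ` defined by the cocycle `f`. -/
@[ext]
structure CocycleExt (f : A → A → QZ) where
  q : QZ
  g : A

namespace CocycleExt

variable {f : A → A → QZ}

instance : Mul (CocycleExt f) := ⟨fun u v ↦ ⟨u.q + v.q + f u.g v.g, u.g * v.g⟩⟩
-- `f` need not be normalized, hence the identity `(-f 1 1, 1)`.
instance : One (CocycleExt f) := ⟨⟨-f 1 1, 1⟩⟩
instance : Inv (CocycleExt f) := ⟨fun u ↦ ⟨-u.q - f u.g⁻¹ u.g - f 1 1, u.g⁻¹⟩⟩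

@[simp] lemma mul_q (u v : CocycleExt f) : (u * v).q = u.q + v.q + f u.g v.g := rfl
@[simp] lemma mul_g (u v : CocycleExt f) : (u * v).g = u.g * v.g := rfl
@[simp] lemma one_q : (1 : CocycleExt f).q = -f 1 1 := rfl
@[simp] lemma one_g : (1 : CocycleExt f).g = 1 := rfl

lemma commute_of_commute_g {u v : CocycleExt f} (h : Commute u.g v.g)
    (hsymm : f u.g v.g = f v.g u.g) : Commute u v := by
  ext
  · simp only [mul_q, hsymm]; abel
  · exact h

variable [hf : Fact (IsGrpCocycle f)]

instance : Group (CocycleExt f) :=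
  Group.ofLeftAxioms
    (fun u v w ↦ by
      ext
      · calc (u * v * w).q = u.q + v.q + w.q + (f u.g v.g + f (u.g * v.g) w.g) := by
              simp only [mul_q, mul_g]; abel
          _ = u.q + v.q + w.q + (f v.g w.g + f u.g (v.g * w.g)) := by rw [hf.out]
          _ = (u * (v * w)).q := by simp only [mul_q, mul_g]; abel
      · exact mul_assoc _ _ _)
    (fun u ↦ by ext <;> simp [hf.out.apply_one_left])
    (fun u ↦ by ext <;> simp [Inv.inv]; abel)

def proj : CocycleExt f →* A where
  toFun := g
  map_one' := rfl
  map_mul' _ _ := rfl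

def incl : Multiplicative QZ →* CocycleExt f where
  toFun r := ⟨r.toAdd - f 1 1, 1⟩
  map_one' := by ext <;> simp
  map_mul' r s := by ext <;> simp; abel

lemma incl_commute (r : Multiplicative QZ) (u : CocycleExt f) : Commute (incl r) u := by
  ext <;> simp [incl, hf.out.apply_one_left, hf.out.apply_one_right_s6]; abel

lemma exists_lift_pow_eq_one {x : A} {m : ℕ} (hx : x ^ m = 1) :
    ∃ u : CocycleExt f, u.g = x ∧ u ^ m = 1 := by
  rcases eq_or_ne m 0 with rfl | hm
  · exact ⟨⟨0, x⟩, rfl, pow_zero _⟩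
  set u₀ : CocycleExt f := ⟨0, x⟩
  have hu₀ : (u₀ ^ m).g = 1 := by
    change proj (u₀ ^ m) = 1
    rw [map_pow]
    exact hx
  obtain ⟨r, hr⟩ := QZ.exists_nsmul_eq hm (-(u₀ ^ m).q - f 1 1)
  refine ⟨incl (Multiplicative.ofAdd r) * u₀, by simp [incl, u₀], ?_⟩
  rw [(incl_commute _ _).mul_pow, ← map_pow, ← ofAdd_nsmul, hr]
  ext
  · simp only [incl, MonoidHom.coe_mk, OneHom.coe_mk, toAdd_ofAdd, mul_q, hu₀, one_q]
    abel
  · simp [incl, hu₀]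

lemma exists_lift_of_isCyclic {K : Type*} [Group K] [IsCyclic K] (j : K →* A) :
    ∃ s : K →* CocycleExt f, proj.comp s = j := by
  obtain ⟨k, hk⟩ := IsCyclic.exists_generator (α := K)
  obtain ⟨u, hug, hu⟩ := exists_lift_pow_eq_one (f := f) (x := j k) (m := orderOf k)
    (by rw [← map_pow, pow_orderOf_eq_one, map_one])
  exact ⟨monoidHomOfForallMemZpowers hk (orderOf_dvd_of_pow_eq_one hu),
    (MonoidHom.eq_iff_eq_on_generator hk _ _).2 (by simp [proj, hug])⟩

lemma isGrpCoboundary_of_proj_comp_eq_id (s : A →* CocycleExt f)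
    (hs : proj.comp s = MonoidHom.id A) : IsGrpCoboundary f := by
  refine ⟨fun a ↦ -(s a).q, fun a b ↦ ?_⟩
  have hg (a : A) : (s a).g = a := DFunLike.congr_fun hs a
  have hq : (s (a * b)).q = (s a).q + (s b).q + f a b := by
    rw [map_mul, mul_q, hg, hg]
  change f a b = -(s a).q + -(s b).q - -(s (a * b)).q
  rw [hq]
  abel

end CocycleExt

open CocycleExt in
/-- The extension splits over each cyclic factor, and the two splittings commute because `f` is
symmetric. -/
theorem IsBicyclic.isGrpCoboundary {f : A → A → QZ} (hA : IsBicyclic A) (hf : IsGrpCocycle f)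
    (hsymm : ∀ a b, Commute a b → f a b = f b a) : IsGrpCoboundary f := by
  have : Fact (IsGrpCocycle f) := ⟨hf⟩
  rcases hA with hcyc | ⟨B, C, hB, hC, ⟨e⟩⟩
  · obtain ⟨s, hs⟩ := exists_lift_of_isCyclic (f := f) (MonoidHom.id A)
    exact isGrpCoboundary_of_proj_comp_eq_id s hs
  · obtain ⟨sB, hsB⟩ :=
      exists_lift_of_isCyclic (f := f) ((e.symm : B × C →* A).comp (MonoidHom.inl B C))
    obtain ⟨sC, hsC⟩ :=
      exists_lift_of_isCyclic (f := f) ((e.symm : B × C →* A).comp (MonoidHom.inr B C))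
    have hB' (b : B) : proj (sB b) = e.symm (b, 1) := DFunLike.congr_fun hsB b
    have hC' (c : C) : proj (sC c) = e.symm (1, c) := DFunLike.congr_fun hsC c
    have hcomm (b : B) (c : C) : Commute (sB b) (sC c) := by
      have hBC : Commute (proj (sB b)) (proj (sC c)) := by
        rw [hB', hC']
        exact Commute.map (show Commute ((b, 1) : B × C) (1, c) from Prod.ext (by simp) (by simp))
          e.symm
      exact commute_of_commute_g hBC (hsymm _ _ hBC)
    refine isGrpCoboundary_of_proj_comp_eq_id ((sB.noncommCoprod sC hcomm).comp e.toMonoidHom) ?_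
    ext a
    change proj (sB (e a).1 * sC (e a).2) = a
    rw [map_mul, hB', hC', ← map_mul, Prod.mk_mul_mk, mul_one, one_mul]
    simp

end Extension

section Bogomolov

variable {G : Type*} [Group G]

lemma restrictsToCoboundaries_of_commute {f : G → G → QZ} (hf : IsGrpCocycle f)
    (hsymm : ∀ g h, Commute g h → f g h = f h g) : RestrictsToCoboundaries f :=
  fun A hA ↦ hA.isGrpCoboundary (fun a b c ↦ hf a b c)
    (fun a b hab ↦ hsymm a b (hab.map A.subtype))

/-- If `f = δc`, both sides equal `-c z`. -/
lemma IsGrpCoboundary.sub_swap_eq {f : G → G → QZ} (hf : IsGrpCoboundary f) {x y x' y' z : G}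
    (h : x * y = y * x * z) (h' : x' * y' = y' * x' * z) :
    f x y - f y x - f (y * x) z = f x' y' - f y' x' - f (y' * x') z := by
  obtain ⟨c, hc⟩ := hf
  have key (x y : G) (h : x * y = y * x * z) : f x y - f y x - f (y * x) z = -c z := by
    rw [hc, hc, hc, ← h]
    abel
  rw [key x y h, key x' y' h']

end Bogomolov

lemma Nat.succ_choose_two (n : ℕ) : (n + 1).choose 2 = n.choose 2 + n := by
  rw [Nat.choose_succ_succ', Nat.choose_one_right, add_comm]

lemma Nat.succ_choose_three (n : ℕ) : (n + 1).choose 3 = n.choose 3 + n.choose 2 := by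
  rw [Nat.choose_succ_succ', add_comm]

lemma Nat.two_mul_choose_two_add_self (n : ℕ) : 2 * n.choose 2 + n = n * n := by
  induction n with
  | zero => rfl
  | succ n ih => rw [Nat.succ_choose_two]; linear_combination ih

namespace ZMod

variable {p : ℕ}

lemma two_mul_natCast_val_choose_two [NeZero p] (x : ZMod p) :
    2 * (x.val.choose 2 : ZMod p) = x * x - x := by
  have h := congrArg (Nat.cast : ℕ → ZMod p) (Nat.two_mul_choose_two_add_self x.val)
  push_cast [ZMod.natCast_zmod_val] at h
  linear_combination h

lemma two_ne_zero_of_odd (hp : p.Prime) (hodd : Odd p) : (2 : ZMod p) ≠ 0 := by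
  rw [Ne, ← Nat.cast_ofNat, ZMod.natCast_eq_zero_iff, Nat.prime_dvd_prime_iff_eq hp Nat.prime_two]
  rintro rfl
  exact absurd hodd (by decide)

lemma natCast_val_choose_two [Fact p.Prime] (h2 : (2 : ZMod p) ≠ 0) (x : ZMod p) :
    (x.val.choose 2 : ZMod p) = 2⁻¹ * (x * x - x) := by
  rw [← two_mul_natCast_val_choose_two, inv_mul_cancel_left₀ h2]

end ZMod

namespace Phi10

section Collection

variable {G : Type*} [Group G]

/-- The commutator relations of `Φ₁₀(1⁵)`; `SemiconjBy f1 (f2 * f3) f2` says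
`f1⁻¹ f2 f1 = f2 f3`. -/
structure Rels (f1 f2 f3 f4 f5 : G) : Prop where
  conj21 : SemiconjBy f1 (f2 * f3) f2
  conj31 : SemiconjBy f1 (f3 * f4) f3
  conj41 : SemiconjBy f1 (f4 * f5) f4
  conj32 : SemiconjBy f2 (f3 * f5) f3
  comm42 : Commute f4 f2
  comm43 : Commute f4 f3
  central5 : ∀ g, Commute f5 g

lemma semiconjBy_of_cmt_eq {x y z : G} (h : cmt x y = z) : SemiconjBy y (x * z) x := by
  rw [SemiconjBy, ← h, cmt]
  group

lemma commute_of_cmt_eq_one {x y : G} (h : cmt x y = 1) : Commute x y := by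
  have h' := (semiconjBy_of_cmt_eq h).eq
  rw [mul_one] at h'
  exact h'.symm

lemma Rels.of_cmt {f1 f2 f3 f4 f5 : G} (r1 : cmt f2 f1 = f3) (r2 : cmt f3 f1 = f4)
    (r3 : cmt f4 f1 = f5) (r4 : cmt f3 f2 = f5) (r5 : cmt f4 f2 = 1) (r6 : cmt f4 f3 = 1)
    (h5 : f5 ∈ Subgroup.center G) : Rels f1 f2 f3 f4 f5 where
  conj21 := semiconjBy_of_cmt_eq r1
  conj31 := semiconjBy_of_cmt_eq r2
  conj41 := semiconjBy_of_cmt_eq r3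
  conj32 := semiconjBy_of_cmt_eq r4
  comm42 := commute_of_cmt_eq_one r5
  comm43 := commute_of_cmt_eq_one r6
  central5 g := (Subgroup.mem_center_iff.mp h5 g).symm

namespace Rels

variable {f1 f2 f3 f4 f5 : G}

lemma f4_mul_f1 (h : Rels f1 f2 f3 f4 f5) : f4 * f1 = f1 * f4 * f5 := by
  rw [mul_assoc]
  exact h.conj41.eq.symm

lemma f3_mul_f2 (h : Rels f1 f2 f3 f4 f5) : f3 * f2 = f2 * f3 * f5 := by
  rw [mul_assoc]
  exact h.conj32.eq.symm

lemma f3_pow_mul_f2_pow (h : Rels f1 f2 f3 f4 f5) (c B : ℕ) :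
    f3 ^ c * f2 ^ B = f2 ^ B * f3 ^ c * f5 ^ (c * B) := by
  have hstep : f3 ^ c * f2 = f2 * f3 ^ c * f5 ^ c := by
    rw [mul_assoc, ← (h.central5 f3).symm.mul_pow]
    exact (h.conj32.pow_right c).symm
  induction B with
  | zero => simp
  | succ B ih =>
    rw [pow_succ, ← mul_assoc, ih, mul_assoc _ (f5 ^ _), ((h.central5 f2).pow_left _).eq,
      mul_assoc (f2 ^ B), ← mul_assoc (f3 ^ c), hstep]
    simp only [mul_assoc, ← pow_add]
    ring_nf

lemma normal_mul_normal (h : Rels f1 f2 f3 f4 f5) (b c d e B C D E : ℕ) :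
    f2 ^ b * f3 ^ c * f4 ^ d * f5 ^ e * (f2 ^ B * f3 ^ C * f4 ^ D * f5 ^ E)
      = f2 ^ (b + B) * f3 ^ (c + C) * f4 ^ (d + D) * f5 ^ (e + E + c * B) := by
  have h5 (n : ℕ) (g : G) : Commute (f5 ^ n) g := (h.central5 g).pow_left n
  have hz : Commute (f4 ^ d * f5 ^ e) (f2 ^ B * f3 ^ C) :=
    ((h.comm42.pow_pow d B).mul_right (h.comm43.pow_pow d C)).mul_left (h5 e _)
  calc f2 ^ b * f3 ^ c * f4 ^ d * f5 ^ e * (f2 ^ B * f3 ^ C * f4 ^ D * f5 ^ E)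
      = f2 ^ b * (f3 ^ c * ((f4 ^ d * f5 ^ e) * ((f2 ^ B * f3 ^ C) * (f4 ^ D * f5 ^ E)))) := by
        simp only [mul_assoc]
    _ = f2 ^ b * (f3 ^ c * f2 ^ B) * f3 ^ C * (f4 ^ d * f5 ^ e * (f4 ^ D * f5 ^ E)) := by
        rw [hz.left_comm]
        simp only [mul_assoc]
    _ = f2 ^ b * (f2 ^ B * f3 ^ c * f5 ^ (c * B)) * f3 ^ C *
          (f4 ^ d * f4 ^ D * (f5 ^ e * f5 ^ E)) := by
        rw [h.f3_pow_mul_f2_pow, (h5 e _).mul_mul_mul_comm (f4 ^ d) (f5 ^ E)]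
    _ = f2 ^ b * f2 ^ B * (f3 ^ c * f3 ^ C) * (f4 ^ d * f4 ^ D) *
          (f5 ^ e * f5 ^ E * f5 ^ (c * B)) := by
        simp only [mul_assoc, (h5 (c * B) _).left_comm, (h5 (c * B) (f5 ^ E)).eq]
    _ = _ := by simp only [← pow_add]

lemma mul_pow_f2_f3 (h : Rels f1 f2 f3 f4 f5) (n : ℕ) :
    (f2 * f3) ^ n = f2 ^ n * f3 ^ n * f5 ^ n.choose 2 := by
  induction n with
  | zero => simp
  | succ n ih =>
    have hstep := h.normal_mul_normal n n 0 (n.choose 2) 1 1 0 0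
    simp only [pow_zero, mul_one, pow_one, add_zero] at hstep
    rw [pow_succ, ih, hstep, Nat.succ_choose_two]

lemma normal_mul_f1 (h : Rels f1 f2 f3 f4 f5) (b c d e : ℕ) :
    f2 ^ b * f3 ^ c * f4 ^ d * f5 ^ e * f1
      = f1 * (f2 ^ b * f3 ^ (c + b) * f4 ^ (d + c) * f5 ^ (e + d + b.choose 2)) := by
  have h2 : SemiconjBy f1 (f2 ^ b * f3 ^ b * f4 ^ 0 * f5 ^ b.choose 2) (f2 ^ b) := by
    rw [pow_zero, mul_one, ← h.mul_pow_f2_f3]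
    exact h.conj21.pow_right b
  have h3 : SemiconjBy f1 (f2 ^ 0 * f3 ^ c * f4 ^ c * f5 ^ 0) (f3 ^ c) := by
    rw [pow_zero, pow_zero, one_mul, mul_one, ← h.comm43.symm.mul_pow]
    exact h.conj31.pow_right c
  have h4 : SemiconjBy f1 (f2 ^ 0 * f3 ^ 0 * f4 ^ d * f5 ^ d) (f4 ^ d) := by
    rw [pow_zero, pow_zero, one_mul, one_mul, ← (h.central5 f4).symm.mul_pow]
    exact h.conj41.pow_right d
  have h5 : SemiconjBy f1 (f2 ^ 0 * f3 ^ 0 * f4 ^ 0 * f5 ^ e) (f5 ^ e) := by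
    rw [pow_zero, pow_zero, pow_zero, one_mul, one_mul, one_mul]
    exact ((h.central5 f1).pow_left e).symm
  rw [← (((h2.mul_right h3).mul_right h4).mul_right h5).eq, h.normal_mul_normal,
    h.normal_mul_normal, h.normal_mul_normal]
  ring_nf

lemma normal_mul_f1_pow (h : Rels f1 f2 f3 f4 f5) (b c d e k : ℕ) :
    f2 ^ b * f3 ^ c * f4 ^ d * f5 ^ e * f1 ^ k
      = f1 ^ k * (f2 ^ b * f3 ^ (c + k * b) * f4 ^ (d + k * c + k.choose 2 * b) *
          f5 ^ (e + k * d + k.choose 2 * c + k.choose 3 * b + k * b.choose 2)) := by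
  induction k with
  | zero => simp
  | succ k ih =>
    rw [pow_succ, ← mul_assoc, ih, mul_assoc, h.normal_mul_f1, ← mul_assoc, ← pow_succ]
    rw [Nat.succ_choose_two, Nat.succ_choose_three]
    ring_nf

lemma collection (h : Rels f1 f2 f3 f4 f5) (a b c d e A B C D E : ℕ) :
    f1 ^ a * (f2 ^ b * f3 ^ c * f4 ^ d * f5 ^ e) * (f1 ^ A * (f2 ^ B * f3 ^ C * f4 ^ D * f5 ^ E))
      = f1 ^ (a + A) * (f2 ^ (b + B) * f3 ^ (c + C + A * b) *
          f4 ^ (d + D + A * c + A.choose 2 * b) *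
          f5 ^ (e + E + A * d + A.choose 2 * c + A.choose 3 * b + A * b.choose 2 +
            (c + A * b) * B)) := by
  rw [mul_assoc, ← mul_assoc _ (f1 ^ A), h.normal_mul_f1_pow, mul_assoc, ← mul_assoc (f1 ^ a),
    ← pow_add, h.normal_mul_normal]
  ring_nf

end Rels

end Collection

/-- Exponent vectors `(a, b, c, d, e)` of normal words `f1^a f2^b f3^c f4^d f5^e`. -/
abbrev Coords (p : ℕ) := ZMod p × ZMod p × ZMod p × ZMod p × ZMod p

section Model

variable {p : ℕ}

/-- The collection formula `Rels.collection` with exponents in `ZMod p`. -/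
def mulLaw : Coords p → Coords p → Coords p
  | (a, b, c, d, e), (A, B, C, D, E) =>
    (a + A, b + B, c + C + A * b, d + D + A * c + (A.val.choose 2 : ZMod p) * b,
      e + E + A * d + (A.val.choose 2 : ZMod p) * c + (A.val.choose 3 : ZMod p) * b +
        A * (b.val.choose 2 : ZMod p) + (c + A * b) * B)

/-- The last two terms of the `f5`-coordinate of `mulLaw`. -/
def cocycle : Coords p → Coords p → ZMod p
  | (_, b, c, _, _), (A, B, _, _, _) => A * (b.val.choose 2 : ZMod p) + (c + A * b) * B

variable [Fact p.Prime]

lemma cocycle_add_cocycle (h2 : (2 : ZMod p) ≠ 0) (v w u : Coords p) :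
    cocycle v w + cocycle (mulLaw v w) u = cocycle w u + cocycle v (mulLaw w u) := by
  obtain ⟨a, b, c, d, e⟩ := v
  obtain ⟨A, B, C, D, E⟩ := w
  obtain ⟨A', B', C', D', E'⟩ := u
  simp only [mulLaw, cocycle, ZMod.natCast_val_choose_two h2]
  linear_combination (b * B * A') * (mul_inv_cancel₀ h2)

lemma cocycle_comm_of_fst_ne_zero (h2 : (2 : ZMod p) ≠ 0) {v w : Coords p}
    (hc : mulLaw v w = mulLaw w v) (hv : v.1 ≠ 0) : cocycle v w = cocycle w v := by
  obtain ⟨a, b, c, d, e⟩ := v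
  obtain ⟨A, B, C, D, E⟩ := w
  simp only [mulLaw, Prod.mk.injEq, ZMod.natCast_val_choose_two h2] at hc
  obtain ⟨-, -, e3, e4, -⟩ := hc
  apply mul_left_cancel₀ hv
  simp only [cocycle, ZMod.natCast_val_choose_two h2]
  linear_combination
    (-c + 2⁻¹ * (b - a - b * A + a * B + a * b)) * e3 + b * e4 +
      (a * a * b * B - a * b * A * B) * (mul_inv_cancel₀ h2)

lemma cocycle_comm (h2 : (2 : ZMod p) ≠ 0) {v w : Coords p} (hc : mulLaw v w = mulLaw w v) :
    cocycle v w = cocycle w v := by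
  by_cases hv : v.1 = 0
  · by_cases hw : w.1 = 0
    · obtain ⟨a, b, c, d, e⟩ := v
      obtain ⟨A, B, C, D, E⟩ := w
      simp only at hv hw
      subst hv hw
      simp [mulLaw, cocycle] at hc ⊢
      linear_combination hc.2.2.2
    · exact (cocycle_comm_of_fst_ne_zero h2 hc.symm hw).symm
  · exact cocycle_comm_of_fst_ne_zero h2 hc hv

end Model

section Coordinates

variable {p : ℕ} {G : Type*} [Group G] {f1 f2 f3 f4 f5 : G}

def coordMap (f1 f2 f3 f4 f5 : G) : Coords p → G
  | (a, b, c, d, e) => f1 ^ a.val * (f2 ^ b.val * f3 ^ c.val * f4 ^ d.val * f5 ^ e.val)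

lemma coordMap_natCast (hexp : ∀ g ∈ ({f1, f2, f3, f4, f5} : Set G), g ^ p = 1)
    (a b c d e : ℕ) :
    coordMap f1 f2 f3 f4 f5 ((a : ZMod p), (b : ZMod p), (c : ZMod p), (d : ZMod p), (e : ZMod p))
      = f1 ^ a * (f2 ^ b * f3 ^ c * f4 ^ d * f5 ^ e) := by
  simp only [coordMap, ZMod.val_natCast]
  simp only [Set.mem_insert_iff, Set.mem_singleton_iff, forall_eq_or_imp, forall_eq] at hexp
  rw [← pow_eq_pow_mod _ hexp.1, ← pow_eq_pow_mod _ hexp.2.1, ← pow_eq_pow_mod _ hexp.2.2.1,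
    ← pow_eq_pow_mod _ hexp.2.2.2.1, ← pow_eq_pow_mod _ hexp.2.2.2.2]

lemma Rels.coordMap_mul [NeZero p] (h : Rels f1 f2 f3 f4 f5)
    (hexp : ∀ g ∈ ({f1, f2, f3, f4, f5} : Set G), g ^ p = 1) (v w : Coords p) :
    coordMap f1 f2 f3 f4 f5 v * coordMap f1 f2 f3 f4 f5 w
      = coordMap f1 f2 f3 f4 f5 (mulLaw v w) := by
  obtain ⟨a, b, c, d, e⟩ := v
  obtain ⟨A, B, C, D, E⟩ := w
  conv_lhs => simp only [coordMap]; rw [h.collection, ← coordMap_natCast hexp]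
  congr 1
  simp [mulLaw]

lemma Rels.coordMap_surjective [Finite G] [Fact p.Prime] (h : Rels f1 f2 f3 f4 f5)
    (hexp : ∀ g ∈ ({f1, f2, f3, f4, f5} : Set G), g ^ p = 1)
    (hgen : Subgroup.closure {f1, f2, f3, f4, f5} = ⊤) :
    Function.Surjective (coordMap f1 f2 f3 f4 f5 : Coords p → G) := by
  let M : Submonoid G :=
    { carrier := Set.range (coordMap f1 f2 f3 f4 f5 : Coords p → G)
      mul_mem' := by
        rintro _ _ ⟨v, rfl⟩ ⟨w, rfl⟩
        exact ⟨mulLaw v w, (h.coordMap_mul hexp v w).symm⟩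
      one_mem' := ⟨0, by simp [coordMap]⟩ }
  have hgens : {f1, f2, f3, f4, f5} ⊆ (M : Set G) := by
    rintro g (rfl | rfl | rfl | rfl | rfl)
    exacts [⟨(1, 0, 0, 0, 0), by simp [coordMap, ZMod.val_one]⟩,
      ⟨(0, 1, 0, 0, 0), by simp [coordMap, ZMod.val_one]⟩,
      ⟨(0, 0, 1, 0, 0), by simp [coordMap, ZMod.val_one]⟩,
      ⟨(0, 0, 0, 1, 0), by simp [coordMap, ZMod.val_one]⟩,
      ⟨(0, 0, 0, 0, 1), by simp [coordMap, ZMod.val_one]⟩]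
  intro g
  have hg : g ∈ Submonoid.closure {f1, f2, f3, f4, f5} := by
    rw [← Subgroup.closure_toSubmonoid_of_finite, hgen]
    trivial
  exact Submonoid.closure_le.2 hgens hg

lemma Rels.coordMap_bijective [Finite G] [Fact p.Prime] (h : Rels f1 f2 f3 f4 f5)
    (hexp : ∀ g ∈ ({f1, f2, f3, f4, f5} : Set G), g ^ p = 1)
    (hgen : Subgroup.closure {f1, f2, f3, f4, f5} = ⊤) (hcard : Nat.card G = p ^ 5) :
    Function.Bijective (coordMap f1 f2 f3 f4 f5 : Coords p → G) :=
  (Nat.bijective_iff_surjective_and_card _).2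
    ⟨h.coordMap_surjective hexp hgen, by simp [hcard]; ring⟩

lemma Rels.exists_coords [Finite G] [Fact p.Prime] (h : Rels f1 f2 f3 f4 f5)
    (hexp : ∀ g ∈ ({f1, f2, f3, f4, f5} : Set G), g ^ p = 1)
    (hgen : Subgroup.closure {f1, f2, f3, f4, f5} = ⊤) (hcard : Nat.card G = p ^ 5) :
    ∃ ψ : G → Coords p, (∀ g g', ψ (g * g') = mulLaw (ψ g) (ψ g')) ∧
      ψ f1 = (1, 0, 0, 0, 0) ∧ ψ f2 = (0, 1, 0, 0, 0) ∧ ψ f3 = (0, 0, 1, 0, 0) ∧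
      ψ f4 = (0, 0, 0, 1, 0) ∧ ψ f5 = (0, 0, 0, 0, 1) := by
  let e := Equiv.ofBijective _ (h.coordMap_bijective hexp hgen hcard)
  refine ⟨e.symm, fun g g' ↦ ?_, ?_⟩
  · rw [e.symm_apply_eq, Equiv.ofBijective_apply, ← h.coordMap_mul hexp]
    exact congrArg₂ (· * ·) (e.apply_symm_apply g).symm (e.apply_symm_apply g').symm
  · simp only [e.symm_apply_eq]
    simp [e, coordMap, ZMod.val_one]

variable [Fact p.Prime] {ψ : G → Coords p}

lemma isGrpCocycle_pullback (h2 : (2 : ZMod p) ≠ 0)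
    (hψ : ∀ g g', ψ (g * g') = mulLaw (ψ g) (ψ g')) :
    IsGrpCocycle fun g g' ↦ ZMod.toQZ p (cocycle (ψ g) (ψ g')) := fun g g' g'' ↦ by
  simp only [hψ, ← map_add, cocycle_add_cocycle h2]

lemma cocycle_pullback_comm (h2 : (2 : ZMod p) ≠ 0)
    (hψ : ∀ g g', ψ (g * g') = mulLaw (ψ g) (ψ g')) {g g' : G} (hgg' : Commute g g') :
    cocycle (ψ g) (ψ g') = cocycle (ψ g') (ψ g) :=
  cocycle_comm h2 (by rw [← hψ, ← hψ, hgg'.eq])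

end Coordinates

end Phi10

/-- Let `p` be an odd prime and `G` the group `Φ₁₀(1⁵)`, i.e. the group of order `p⁵` with
generators `f1,…,f5` and relations `fᵢ^p = 1`, `[f2,f1] = f3`, `[f3,f1] = f4`,
`[f4,f1] = [f3,f2] = f5`, `[f4,f2] = [f4,f3] = 1`, and `f5` central. Then `B₀(G) ≠ 0`. -/
theorem B0_phi10_ne_bot (p : ℕ) (hp : p.Prime) (hodd : Odd p)
    (G : Type) [Group G] [Finite G] (hcard : Nat.card G = p ^ 5)
    (f1 f2 f3 f4 f5 : G)
    (hgen : Subgroup.closure {f1, f2, f3, f4, f5} = ⊤)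
    (h1p : f1 ^ p = 1) (h2p : f2 ^ p = 1) (h3p : f3 ^ p = 1) (h4p : f4 ^ p = 1)
    (h5p : f5 ^ p = 1)
    (r1 : cmt f2 f1 = f3) (r2 : cmt f3 f1 = f4) (r3 : cmt f4 f1 = f5)
    (r4 : cmt f3 f2 = f5) (r5 : cmt f4 f2 = 1) (r6 : cmt f4 f3 = 1)
    (h5c : f5 ∈ Subgroup.center G) :
    B0 G ≠ ⊥ := by
  have : Fact p.Prime := ⟨hp⟩
  have h2 := ZMod.two_ne_zero_of_odd hp hodd
  have hexp : ∀ g ∈ ({f1, f2, f3, f4, f5} : Set G), g ^ p = 1 := by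
    rintro g (rfl | rfl | rfl | rfl | rfl) <;> assumption
  have hrels := Phi10.Rels.of_cmt r1 r2 r3 r4 r5 r6 h5c
  obtain ⟨ψ, hψ, hψ1, hψ2, hψ3, hψ4, hψ5⟩ := hrels.exists_coords hexp hgen hcard
  let ω : G → G → QZ := fun g h ↦ ZMod.toQZ p (Phi10.cocycle (ψ g) (ψ h))
  have hω : IsGrpCocycle ω := Phi10.isGrpCocycle_pullback h2 hψ
  have hrestr : RestrictsToCoboundaries ω := restrictsToCoboundaries_of_commute hω
    fun g h hgh ↦ congrArg (ZMod.toQZ p) (Phi10.cocycle_pullback_comm h2 hψ hgh)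
  refine AddSubgroup.ne_bot_iff_exists_ne_zero.2
    ⟨⟨_, ⟨ω, hω⟩, rfl, hrestr⟩, fun h0 ↦ ?_⟩
  have hcob : IsGrpCoboundary ω :=
    (QuotientAddGroup.eq_zero_iff _).1 (congrArg Subtype.val h0)
  -- the two sides evaluate to `0` and `1/p`
  have key := hcob.sub_swap_eq hrels.f4_mul_f1 hrels.f3_mul_f2
  simp [ω, hψ, hψ1, hψ2, hψ3, hψ4, hψ5, Phi10.cocycle, Phi10.mulLaw] at key
  exact ZMod.toQZ_one_ne_zero hp.one_lt key.symm
end
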